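/- For every integer h ≥ 3, the number of Fink–Mao region words of length h equals (2^(h−2) − (−1)^h)/3. -/

import Mathlib

/-- A region of the tie diagram: left, right, or center. -/
inductive Region : Type
  | L | R | C
deriving DecidableEq

open Region

/-- A Fink–Mao region word: a list of letters from {L, R, C} with consecutive
letters distinct, first letter `L`, ending with the suffix `L,R,C` or `R,L,C`. -/
def FMWord (w : List Region) : Prop :=
  w.Chain' (· ≠ ·) ∧ w.head? = some L ∧
    ([L, R, C] <:+ w ∨ [R, L, C] <:+ w)

/-!
A Fink–Mao word of length `n + 3` is a word `L = x₀, …, xₙ` with consecutive letters distinct,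
followed by `R, C` if `xₙ = L` and by `L, C` if `xₙ = R`: a walk of length `n` from `L` to `L` or
to `R` in the complete graph on `{L, R, C}`, extended by two fixed letters. In the complete graph
on `q` vertices the number `W n a b` of walks of length `n` from `a` to `b` satisfies
`W (n + 1) a b = (q - 1) ^ n - W n a b`, since the walks from the neighbours of `a` are all walks
but those from `a`. Hence `q * W n a b = (q - 1) ^ n + (-1) ^ n * (q * [a = b] - 1)`, and for
`q = 3` the two counts add up to `(2 ^ (n + 1) + (-1) ^ n) / 3`.
-/

open Finset

section Walks

variable {α : Type*} [Fintype α] [DecidableEq α]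

def walks : ℕ → α → α → Finset (List α)
  | 0, a, b => if a = b then {[a]} else ∅
  | n + 1, a, b => (univ.erase a).biUnion fun c => (walks n c b).image (a :: ·)

theorem mem_walks {n : ℕ} {a b : α} {w : List α} :
    w ∈ walks n a b ↔
      w.IsChain (· ≠ ·) ∧ w.length = n + 1 ∧ w.head? = some a ∧ w.getLast? = some b := by
  induction n generalizing a w with
  | zero =>
    by_cases hab : a = b <;> rcases w with _ | ⟨x, _ | ⟨y, t⟩⟩ <;> simp [walks, hab]
    rintro rfl
    exact hab
  | succ n ih =>
    rcases w with _ | ⟨x, _ | ⟨y, t⟩⟩ <;> simp [walks, ih]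
    grind

theorem card_walks_succ (n : ℕ) (a b : α) :
    #(walks (n + 1) a b) = ∑ c ∈ univ.erase a, #(walks n c b) := by
  rw [walks, card_biUnion]
  · exact sum_congr rfl fun c _ => card_image_of_injective _ List.cons_injective
  · intro c _ d _ hcd
    simp only [Function.onFun, disjoint_left, mem_image]
    rintro _ ⟨u, hu, rfl⟩ ⟨v, hv, hvu⟩
    obtain rfl : v = u := List.cons_injective hvu
    have hu_head := (mem_walks.1 hu).2.2.1
    exact hcd (by simpa [hu_head] using (mem_walks.1 hv).2.2.1)

theorem sum_card_walks (n : ℕ) (b : α) :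
    ∑ a, (#(walks n a b) : ℤ) = (Fintype.card α - 1) ^ n := by
  induction n with
  | zero => simp [walks, apply_ite]
  | succ n ih =>
    simp only [card_walks_succ, Nat.cast_sum, sum_erase_eq_sub (mem_univ _), sum_sub_distrib, ih,
      sum_const, card_univ, nsmul_eq_mul]
    ring

theorem card_walks (n : ℕ) (a b : α) :
    Fintype.card α * (#(walks n a b) : ℤ) =
      (Fintype.card α - 1) ^ n + (-1) ^ n * (if a = b then (Fintype.card α : ℤ) - 1 else -1) := by
  induction n with
  | zero => by_cases hab : a = b <;> simp [walks, hab]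
  | succ n ih =>
    rw [card_walks_succ, Nat.cast_sum, sum_erase_eq_sub (mem_univ _), sum_card_walks]
    linear_combination -ih

theorem exists_mem_walks_append_eq_iff {n : ℕ} {a x y z : α} (hxy : x ≠ y) (hyz : y ≠ z)
    {w : List α} :
    (w.IsChain (· ≠ ·) ∧ w.head? = some a ∧ [x, y, z] <:+ w ∧ w.length = n + 3) ↔
      ∃ u ∈ walks n a x, u ++ [y, z] = w := by
  constructor
  · rintro ⟨hchain, hhead, ⟨t, rfl⟩, hlen⟩
    refine ⟨t ++ [x], mem_walks.2 ⟨?_, ?_, ?_, ?_⟩, by simp⟩ <;> simp_all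
  · rintro ⟨u, hu, rfl⟩
    obtain ⟨hchain, hlen, hhead, hlast⟩ := mem_walks.1 hu
    obtain ⟨t, rfl⟩ := List.getLast?_eq_some_iff.1 hlast
    refine ⟨?_, ?_, ⟨t, by simp⟩, ?_⟩ <;> simp_all

end Walks

instance : Fintype Region := ⟨{L, R, C}, fun x => by cases x <;> simp⟩

theorem fmWord_and_length_eq_iff {n : ℕ} {w : List Region} :
    FMWord w ∧ w.length = n + 3 ↔
      w ∈ (walks n L L).image (· ++ [R, C]) ∪ (walks n L R).image (· ++ [L, C]) := by
  simp only [mem_union, mem_image,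
    ← exists_mem_walks_append_eq_iff (by decide : L ≠ R) (by decide : R ≠ C),
    ← exists_mem_walks_append_eq_iff (by decide : R ≠ L) (by decide : L ≠ C), FMWord, List.Chain']
  tauto

theorem natCard_fmWords (n : ℕ) :
    Nat.card {w // FMWord w ∧ w.length = n + 3} = #(walks n L L) + #(walks n L R) := by
  rw [Nat.card_congr (Equiv.subtypeEquivRight fun w => fmWord_and_length_eq_iff),
    Nat.card_eq_finsetCard, card_union_of_disjoint,
    card_image_of_injective _ (List.append_left_injective _),
    card_image_of_injective _ (List.append_left_injective _)]
  simp only [disjoint_left, mem_image]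
  rintro _ ⟨u, -, rfl⟩ ⟨v, -, h⟩
  simpa using congrArg List.reverse h

/-- For every `h ≥ 3`, the number of Fink–Mao region words of length `h` equals
`(2^(h-2) - (-1)^h)/3`. -/
theorem count_FMWords (h : ℕ) (hh : 3 ≤ h) :
    (Nat.card {w : List Region // FMWord w ∧ w.length = h} : ℤ) =
      (2 ^ (h - 2) - (-1) ^ h) / 3 := by
  obtain ⟨n, rfl⟩ := Nat.exists_eq_add_of_le' hh
  have hLL := card_walks n L L
  have hLR := card_walks n L R
  simp only [show Fintype.card Region = 3 from rfl, Nat.cast_ofNat, ↓reduceIte, reduceCtorEq]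
    at hLL hLR
  rw [natCard_fmWords, show n + 3 - 2 = n + 1 by omega]
  symm
  apply Int.ediv_eq_of_eq_mul_left three_ne_zero
  push_cast
  linear_combination -(hLL + hLR)
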